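/- Let B̄ be a smooth affine algebra over a perfect field k of characteristic p > 0, B† its Monsky–Washnitzer algebra, t_F: B† → W†(B̄) the overconvergent Witt lift attached to a Frobenius lift F on B†, and (Ẽ, ∇̃) a free B†-module with an integrable connection ∇̃: Ẽ → Ẽ ⊗_{B†} Ω¹_{B†/W(k)}. Then the map ∇: E → E ⊗_{W†(B̄)} W†Ω¹_{B̄/k} on E := Ẽ ⊗_{t_F} W†(B̄), defined as the composition of ∇̃ ⊗ id + id ⊗ d with the map induced by id ⊗ t_F ⊕ id, satisfies the Leibniz rule and is integrable, i.e. ∇² = 0; in other words (E, ∇) is an integrable overconvergent de Rham–Witt connection. -/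

import Mathlib

/-!
# Statement 1

Let `B̄` be a smooth affine algebra over a perfect field `k` of characteristic `p > 0`,
`B†` its Monsky–Washnitzer algebra, `t_F : B† → W†(B̄)` the overconvergent Witt lift
attached to a Frobenius lift `F` on `B†`, and `(Ẽ, ∇̃)` a free `B†`-module with an
integrable connection `∇̃ : Ẽ → Ẽ ⊗ Ω¹_{B†/W(k)}`.  Then the map
`∇ : E → E ⊗ W†Ω¹_{B̄/k}` on `E := Ẽ ⊗_{t_F} W†(B̄)`, defined as the composition of
`∇̃ ⊗ id + id ⊗ d` with the map induced by `id ⊗ t_F ⊕ id`, satisfies the Leibniz rule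
and is integrable (`∇² = 0`); i.e. `(E, ∇)` is an integrable overconvergent
de Rham–Witt connection.

The complexes `Ω_{B†/W(k)}` and `W†Ω_{B̄/k}` are modelled (in the degrees ≤ 2 relevant
for integrability) as truncated commutative differential graded algebras `DGA2`, the map
`t_F` on differential forms as a morphism `DGA2Hom` of such semilinear over the ring map
`t_F = algebraMap B† W†(B̄)`, which is tied to the genuine Witt vector operations of
Mathlib (`W†(B̄)` comes with an injective ring map `ι` to `W(B̄) = WittVector p B̄`,
`t_F` lifts the reduction `B† → B̄` in the 0-th Witt coordinate and intertwines the
Frobenius lift `F` with the Witt vector Frobenius).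
-/

open TensorProduct

/-- A (degrees ≤ 2) truncation of a commutative differential graded `R`-algebra:
an `R`-algebra `A` in degree zero, modules `Ω1`, `Ω2` of one- and two-forms,
differentials `d0`, `d1`, and a wedge product, satisfying the Leibniz rules. -/
structure DGA2 (R : Type) [CommRing R] (A : Type) [CommRing A] [Algebra R A] where
  Ω1 : Type
  Ω2 : Type
  [acg1 : AddCommGroup Ω1]
  [acg2 : AddCommGroup Ω2]
  [mod1 : Module A Ω1]
  [mod2 : Module A Ω2]
  d0 : A →+ Ω1
  d1 : Ω1 →+ Ω2
  wedge : Ω1 →ₗ[A] Ω1 →ₗ[A] Ω2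
  d0_algebraMap : ∀ r : R, d0 (algebraMap R A r) = 0
  d0_mul : ∀ a b : A, d0 (a * b) = a • d0 b + b • d0 a
  d1_smul : ∀ (a : A) (ω : Ω1), d1 (a • ω) = wedge (d0 a) ω + a • d1 ω
  d1_d0 : ∀ a : A, d1 (d0 a) = 0

attribute [instance] DGA2.acg1 DGA2.acg2 DGA2.mod1 DGA2.mod2

/-- A connection `∇ : E → E ⊗ Ω¹` (additive, satisfying the Leibniz rule). -/
structure Conn2 {R : Type} [CommRing R] {A : Type} [CommRing A] [Algebra R A]
    (D : DGA2 R A) (E : Type) [AddCommGroup E] [Module A E] where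
  nabla : E →+ E ⊗[A] D.Ω1
  leibniz : ∀ (a : A) (e : E), nabla (a • e) = a • nabla e + e ⊗ₜ[A] D.d0 a

namespace Conn2

variable {R : Type} [CommRing R] {A : Type} [CommRing A] [Algebra R A]
  {D : DGA2 R A} {E : Type} [AddCommGroup E] [Module A E] (c : Conn2 D E)

/-- The extension `∇¹ : E ⊗ Ω¹ → E ⊗ Ω²`, `e ⊗ ω ↦ ∇e ∧ ω + e ⊗ d ω`. -/
noncomputable def nabla1 : E ⊗[A] D.Ω1 →+ E ⊗[A] D.Ω2 :=
  TensorProduct.liftAddHom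
    { toFun := fun e =>
        { toFun := fun ω =>
            (LinearMap.lTensor E (D.wedge.flip ω)) (c.nabla e) + e ⊗ₜ[A] D.d1 ω
          map_zero' := by simp
          map_add' := by
            intro ω ω'
            simp only [map_add, LinearMap.lTensor_add, LinearMap.add_apply,
              TensorProduct.tmul_add]
            abel }
      map_zero' := by
        ext ω
        simp
      map_add' := by
        intro e e'
        ext ω
        simp only [AddMonoidHom.coe_mk, ZeroHom.coe_mk, map_add, AddMonoidHom.add_apply,
          TensorProduct.add_tmul]
        abel }
    (by
      intro a e ω
      simp only [AddMonoidHom.coe_mk, ZeroHom.coe_mk]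
      rw [c.leibniz, map_add, map_smul, D.d1_smul]
      rw [show (LinearMap.lTensor E (D.wedge.flip ω)) (e ⊗ₜ[A] D.d0 a)
            = e ⊗ₜ[A] D.wedge (D.d0 a) ω from by simp [LinearMap.lTensor_tmul]]
      rw [show D.wedge.flip (a • ω) = a • D.wedge.flip ω from by simp [map_smul]]
      rw [LinearMap.lTensor_smul, LinearMap.smul_apply]
      simp only [TensorProduct.tmul_add, TensorProduct.tmul_smul,
        TensorProduct.smul_tmul']
      abel)

/-- Integrability `∇² = 0` of a connection. -/
def IsIntegrable : Prop := ∀ e : E, c.nabla1 (c.nabla e) = 0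

end Conn2

/-- A morphism of truncated differential graded algebras, semilinear over a ring
homomorphism `f : A → B` of the degree-zero parts (e.g. the comparison map `t_F` from
Monsky–Washnitzer differential forms to the overconvergent de Rham–Witt complex). -/
structure DGA2Hom {R : Type} [CommRing R] {A B : Type} [CommRing A] [CommRing B]
    [Algebra R A] [Algebra R B] (D : DGA2 R A) (D' : DGA2 R B) (f : A →+* B) where
  f1 : D.Ω1 →+ D'.Ω1
  f2 : D.Ω2 →+ D'.Ω2
  f1_smul : ∀ (a : A) (ω : D.Ω1), f1 (a • ω) = f a • f1 ω
  f2_smul : ∀ (a : A) (η : D.Ω2), f2 (a • η) = f a • f2 η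
  comm_d0 : ∀ a : A, f1 (D.d0 a) = D'.d0 (f a)
  comm_d1 : ∀ ω : D.Ω1, f2 (D.d1 ω) = D'.d1 (f1 ω)
  comm_wedge : ∀ ω ω' : D.Ω1, f2 (D.wedge ω ω') = D'.wedge (f1 ω) (f1 ω')

/-- The map `Ẽ ⊗_{B†} Ω¹_{B†/W(k)} → (E ⊗_{W†(B̄)} W†Ω¹_{B̄/k})`,
`e ⊗ ω ↦ (1 ⊗ e) ⊗ t_F(ω)`, on `E = W†(B̄) ⊗_{t_F} Ẽ`. -/
noncomputable def baseChangeForms {R : Type} [CommRing R] {A B : Type} [CommRing A]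
    [CommRing B] [Algebra R A] [Algebra R B] [Algebra A B] {D : DGA2 R A} {D' : DGA2 R B}
    (φ : DGA2Hom D D' (algebraMap A B)) (E : Type) [AddCommGroup E] [Module A E] :
    E ⊗[A] D.Ω1 →+ (B ⊗[A] E) ⊗[B] D'.Ω1 :=
  TensorProduct.liftAddHom
    { toFun := fun e =>
        { toFun := fun ω => ((1 : B) ⊗ₜ[A] e) ⊗ₜ[B] φ.f1 ω
          map_zero' := by simp
          map_add' := by intro ω ω'; simp [map_add, TensorProduct.tmul_add]
        }
      map_zero' := by ext ω; simp
      map_add' := by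
        intro e e'
        ext ω
        simp [TensorProduct.tmul_add, TensorProduct.add_tmul] }
    (by
      intro a e ω
      simp only [AddMonoidHom.coe_mk, ZeroHom.coe_mk]
      rw [φ.f1_smul, TensorProduct.tmul_smul, ← algebraMap_smul B a ((1 : B) ⊗ₜ[A] e),
        TensorProduct.smul_tmul])

namespace DGA2

variable {R : Type} [CommRing R] {A : Type} [CommRing A] [Algebra R A] (D : DGA2 R A)

theorem d0_one : D.d0 1 = 0 := by
  simpa using D.d0_algebraMap 1

/-- `DGA2` does not postulate graded commutativity; on exact forms it follows by applying `d1`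
to the Leibniz rule for `d0 (a * b)`. -/
theorem wedge_d0_add_wedge_d0 (a b : A) :
    D.wedge (D.d0 a) (D.d0 b) + D.wedge (D.d0 b) (D.d0 a) = 0 := by
  have h := congrArg D.d1 (D.d0_mul a b)
  rw [D.d1_d0, map_add, D.d1_smul, D.d1_smul, D.d1_d0, D.d1_d0, smul_zero, smul_zero,
    add_zero, add_zero] at h
  exact h.symm

theorem wedge_d0_add_wedge_of_mem_span (a : A) {η : D.Ω1}
    (hη : η ∈ Submodule.span A (Set.range D.d0)) :
    D.wedge (D.d0 a) η + D.wedge η (D.d0 a) = 0 := by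
  induction hη using Submodule.span_induction with
  | mem x hx =>
      obtain ⟨b, rfl⟩ := hx
      exact D.wedge_d0_add_wedge_d0 a b
  | zero => simp
  | add x y _ _ hx hy =>
      rw [map_add, map_add, LinearMap.add_apply, add_add_add_comm, hx, hy, add_zero]
  | smul c x _ hx =>
      rw [map_smul, map_smul, LinearMap.smul_apply, ← smul_add, hx, smul_zero]

end DGA2

theorem DGA2Hom.f1_mem_span_range_d0 {R : Type} [CommRing R] {A B : Type} [CommRing A]
    [CommRing B] [Algebra R A] [Algebra R B] {D : DGA2 R A} {D' : DGA2 R B} {f : A →+* B}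
    (φ : DGA2Hom D D' f) (hgen : Submodule.span A (Set.range D.d0) = ⊤) (ω : D.Ω1) :
    φ.f1 ω ∈ Submodule.span B (Set.range D'.d0) := by
  have hω : ω ∈ Submodule.span A (Set.range D.d0) := hgen ▸ Submodule.mem_top
  induction hω using Submodule.span_induction with
  | mem x hx =>
      obtain ⟨a, rfl⟩ := hx
      rw [φ.comm_d0]
      exact Submodule.subset_span ⟨_, rfl⟩
  | zero => rw [map_zero]; exact Submodule.zero_mem _
  | add x y _ _ hx hy => rw [map_add]; exact Submodule.add_mem _ hx hy
  | smul a x _ hx => rw [φ.f1_smul]; exact Submodule.smul_mem _ _ hx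

namespace Conn2

variable {R : Type} [CommRing R] {A : Type} [CommRing A] [Algebra R A]
  {D : DGA2 R A} {E : Type} [AddCommGroup E] [Module A E] (c : Conn2 D E)

theorem nabla1_tmul (e : E) (ω : D.Ω1) :
    c.nabla1 (e ⊗ₜ[A] ω)
      = LinearMap.lTensor E (D.wedge.flip ω) (c.nabla e) + e ⊗ₜ[A] D.d1 ω :=
  rfl

theorem nabla1_smul (a : A) (y : E ⊗[A] D.Ω1) :
    c.nabla1 (a • y) = a • c.nabla1 y + LinearMap.lTensor E (D.wedge (D.d0 a)) y := by
  induction y using TensorProduct.induction_on with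
  | zero => simp
  | tmul e ω =>
      rw [← tmul_smul, nabla1_tmul, nabla1_tmul, map_smul, LinearMap.lTensor_smul,
        LinearMap.smul_apply, D.d1_smul, LinearMap.lTensor_tmul, tmul_add, smul_add,
        ← tmul_smul]
      abel
  | add x y hx hy =>
      rw [smul_add, map_add, hx, hy, map_add, map_add, smul_add]
      abel

end Conn2

section BaseChange

variable {R : Type} [CommRing R] {A B : Type} [CommRing A] [CommRing B] [Algebra R A]
  [Algebra R B] [Algebra A B] {D : DGA2 R A} {D' : DGA2 R B}
  (φ : DGA2Hom D D' (algebraMap A B)) (E : Type) [AddCommGroup E] [Module A E]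

theorem baseChangeForms_tmul (e : E) (ω : D.Ω1) :
    baseChangeForms φ E (e ⊗ₜ[A] ω) = ((1 : B) ⊗ₜ[A] e) ⊗ₜ[B] φ.f1 ω :=
  rfl

theorem baseChangeForms_smul (a : A) (t : E ⊗[A] D.Ω1) :
    baseChangeForms φ E (a • t) = algebraMap A B a • baseChangeForms φ E t := by
  induction t using TensorProduct.induction_on with
  | zero => simp
  | tmul e ω =>
      rw [← tmul_smul, baseChangeForms_tmul, baseChangeForms_tmul, φ.f1_smul, tmul_smul]
  | add x y hx hy => rw [smul_add, map_add, map_add, hx, hy, smul_add]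

noncomputable def baseChangeForms2 : E ⊗[A] D.Ω2 →+ (B ⊗[A] E) ⊗[B] D'.Ω2 :=
  TensorProduct.liftAddHom
    { toFun := fun e =>
        { toFun := fun η => ((1 : B) ⊗ₜ[A] e) ⊗ₜ[B] φ.f2 η
          map_zero' := by simp
          map_add' := by intro η η'; simp [tmul_add] }
      map_zero' := by ext η; simp
      map_add' := by intro e e'; ext η; simp [tmul_add, add_tmul] }
    (by
      intro a e η
      simp only [AddMonoidHom.coe_mk, ZeroHom.coe_mk]
      rw [φ.f2_smul, tmul_smul, ← algebraMap_smul B a ((1 : B) ⊗ₜ[A] e), smul_tmul])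

theorem baseChangeForms2_tmul (e : E) (η : D.Ω2) :
    baseChangeForms2 φ E (e ⊗ₜ[A] η) = ((1 : B) ⊗ₜ[A] e) ⊗ₜ[B] φ.f2 η :=
  rfl

theorem lTensor_wedge_flip_baseChangeForms (ω : D.Ω1) (s : E ⊗[A] D.Ω1) :
    LinearMap.lTensor (B ⊗[A] E) (D'.wedge.flip (φ.f1 ω)) (baseChangeForms φ E s)
      = baseChangeForms2 φ E (LinearMap.lTensor E (D.wedge.flip ω) s) := by
  induction s using TensorProduct.induction_on with
  | zero => simp
  | tmul e ω' =>
      rw [baseChangeForms_tmul, LinearMap.lTensor_tmul, LinearMap.lTensor_tmul,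
        baseChangeForms2_tmul, LinearMap.flip_apply, LinearMap.flip_apply, φ.comm_wedge]
  | add x y hx hy => rw [map_add, map_add, map_add, map_add, hx, hy]

theorem lTensor_wedge_add_lTensor_wedge_flip_baseChangeForms
    (hgen : Submodule.span A (Set.range D.d0) = ⊤) (b : B) (s : E ⊗[A] D.Ω1) :
    LinearMap.lTensor (B ⊗[A] E) (D'.wedge (D'.d0 b)) (baseChangeForms φ E s)
      + LinearMap.lTensor (B ⊗[A] E) (D'.wedge.flip (D'.d0 b)) (baseChangeForms φ E s)
      = 0 := by
  induction s using TensorProduct.induction_on with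
  | zero => simp
  | tmul e ω =>
      rw [baseChangeForms_tmul, LinearMap.lTensor_tmul, LinearMap.lTensor_tmul,
        LinearMap.flip_apply, ← tmul_add,
        D'.wedge_d0_add_wedge_of_mem_span b (φ.f1_mem_span_range_d0 hgen ω), tmul_zero]
  | add x y hx hy => rw [map_add, map_add, map_add, add_add_add_comm, hx, hy, add_zero]

end BaseChange

namespace Conn2

variable {R : Type} [CommRing R] {A B : Type} [CommRing A] [CommRing B] [Algebra R A]
  [Algebra R B] [Algebra A B] {D : DGA2 R A} {D' : DGA2 R B}
  (φ : DGA2Hom D D' (algebraMap A B)) {E : Type} [AddCommGroup E] [Module A E]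
  (c : Conn2 D E)

noncomputable def baseChangeNabla : B ⊗[A] E →+ (B ⊗[A] E) ⊗[B] D'.Ω1 :=
  TensorProduct.liftAddHom
    { toFun := fun w =>
        { toFun := fun e =>
            w • baseChangeForms φ E (c.nabla e) + ((1 : B) ⊗ₜ[A] e) ⊗ₜ[B] D'.d0 w
          map_zero' := by simp
          map_add' := by
            intro e e'
            simp only [map_add, smul_add, tmul_add, add_tmul]
            abel }
      map_zero' := by ext e; simp
      map_add' := by
        intro w w'
        ext e
        simp only [AddMonoidHom.coe_mk, ZeroHom.coe_mk, add_smul, map_add, tmul_add,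
          AddMonoidHom.add_apply]
        abel }
    (by
      intro a w e
      simp only [AddMonoidHom.coe_mk, ZeroHom.coe_mk]
      rw [c.leibniz, map_add, baseChangeForms_smul, baseChangeForms_tmul, φ.comm_d0,
        Algebra.smul_def, D'.d0_mul, tmul_add, smul_add, smul_smul, tmul_smul a (1 : B) e,
        ← algebraMap_smul B a ((1 : B) ⊗ₜ[A] e)]
      simp only [tmul_smul, ← smul_tmul']
      rw [mul_comm w (algebraMap A B a)]
      abel)

theorem baseChangeNabla_tmul (w : B) (e : E) :
    c.baseChangeNabla φ (w ⊗ₜ[A] e)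
      = w • baseChangeForms φ E (c.nabla e) + ((1 : B) ⊗ₜ[A] e) ⊗ₜ[B] D'.d0 w :=
  rfl

theorem baseChangeNabla_one_tmul (e : E) :
    c.baseChangeNabla φ ((1 : B) ⊗ₜ[A] e) = baseChangeForms φ E (c.nabla e) := by
  rw [baseChangeNabla_tmul, one_smul, D'.d0_one, tmul_zero, add_zero]

theorem baseChangeNabla_smul (b : B) (x : B ⊗[A] E) :
    c.baseChangeNabla φ (b • x) = b • c.baseChangeNabla φ x + x ⊗ₜ[B] D'.d0 b := by
  induction x using TensorProduct.induction_on with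
  | zero => simp
  | tmul w e =>
      have hw : w ⊗ₜ[A] e = w • ((1 : B) ⊗ₜ[A] e) := by
        rw [smul_tmul', smul_eq_mul, mul_one]
      rw [smul_tmul', baseChangeNabla_tmul, baseChangeNabla_tmul, smul_eq_mul, D'.d0_mul,
        tmul_add, smul_add, smul_smul, hw]
      simp only [tmul_smul, ← smul_tmul']
      abel
  | add x y hx hy =>
      rw [smul_add, map_add, hx, hy, map_add, smul_add, add_tmul]
      abel

noncomputable def baseChange : Conn2 D' (B ⊗[A] E) :=
  ⟨c.baseChangeNabla φ, c.baseChangeNabla_smul φ⟩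

theorem baseChange_nabla : (c.baseChange φ).nabla = c.baseChangeNabla φ :=
  rfl

theorem baseChange_nabla1_baseChangeForms (s : E ⊗[A] D.Ω1) :
    (c.baseChange φ).nabla1 (baseChangeForms φ E s) = baseChangeForms2 φ E (c.nabla1 s) := by
  induction s using TensorProduct.induction_on with
  | zero => simp
  | tmul e ω =>
      rw [baseChangeForms_tmul, nabla1_tmul, nabla1_tmul, baseChange_nabla,
        baseChangeNabla_one_tmul, lTensor_wedge_flip_baseChangeForms, ← φ.comm_d1,
        ← baseChangeForms2_tmul, map_add]
  | add x y hx hy => rw [map_add, map_add, hx, hy, map_add, map_add]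

variable {c} in
/-- On `w ⊗ e`, `∇²` is `w • t(∇̃²e)` plus the two terms `dw ∧ t(∇̃e)` and
`t(∇̃e) ∧ dw`, which cancel by graded commutativity. -/
theorem IsIntegrable.baseChange (hgen : Submodule.span A (Set.range D.d0) = ⊤)
    (hint : c.IsIntegrable) : (c.baseChange φ).IsIntegrable := by
  intro x
  induction x using TensorProduct.induction_on with
  | zero => rw [map_zero, map_zero]
  | tmul w e =>
      rw [baseChange_nabla, baseChangeNabla_tmul, map_add, nabla1_smul,
        baseChange_nabla1_baseChangeForms, hint e, map_zero, smul_zero, zero_add, nabla1_tmul,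
        baseChange_nabla, baseChangeNabla_one_tmul, D'.d1_d0, tmul_zero, add_zero]
      exact lTensor_wedge_add_lTensor_wedge_flip_baseChangeForms φ E hgen w _
  | add x y hx hy => rw [map_add, map_add, hx, hy, add_zero]

end Conn2

theorem statement1_general
    -- a perfect field k of characteristic p > 0
    (p : ℕ) [Fact p.Prime] (k : Type) [Field k]
    -- B†, the Monsky–Washnitzer algebra: a p-torsion free W(k)-algebra with B†/pB† = B̄
    (Bdag : Type) [CommRing Bdag] [Algebra (WittVector p k) Bdag]
    -- W†(B̄), the ring of overconvergent Witt vectors, a subring of W(B̄)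
    (Wdag : Type) [CommRing Wdag] [Algebra (WittVector p k) Wdag]
    -- the overconvergent Witt lift t_F : B† → W†(B̄) attached to F, realised as the
    -- structure map of an algebra structure; it lifts `red` in the 0-th Witt coordinate
    -- and intertwines F with the Witt vector Frobenius
    [Algebra Bdag Wdag]
    -- the complex Ω_{B†/W(k)} of continuous differentials (in degrees ≤ 2), with
    -- Ω¹ generated by the image of d
    (DΩ : DGA2 (WittVector p k) Bdag)
    (hgen : Submodule.span Bdag (Set.range DΩ.d0) = ⊤)
    -- the overconvergent de Rham–Witt complex W†Ω_{B̄/k} (in degrees ≤ 2)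
    (DW : DGA2 (WittVector p k) Wdag)
    -- the comparison map t_F : Ω_{B†/W(k)} → W†Ω_{B̄/k} on differential forms
    (tF : DGA2Hom DΩ DW (algebraMap Bdag Wdag))
    -- (Ẽ, ∇̃): a free B†-module with integrable connection
    (E : Type) [AddCommGroup E] [Module Bdag E]
    (nt : Conn2 DΩ E) (hint : nt.IsIntegrable) :
    -- conclusion: the composite map ∇ on E ⊗_{t_F} W†(B̄) (given on elementary tensors by
    -- the stated formula) satisfies the Leibniz rule, i.e. is a connection
    -- with values in W†Ω¹_{B̄/k}, and is integrable
    ∃ C : Conn2 DW (Wdag ⊗[Bdag] E),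
      (∀ (w : Wdag) (e : E),
        C.nabla (w ⊗ₜ[Bdag] e)
          = w • baseChangeForms tF E (nt.nabla e)
            + ((1 : Wdag) ⊗ₜ[Bdag] e) ⊗ₜ[Wdag] DW.d0 w)
      ∧ C.IsIntegrable :=
  ⟨nt.baseChange tF, nt.baseChangeNabla_tmul tF, hint.baseChange tF hgen⟩

theorem statement1
    -- a perfect field k of characteristic p > 0
    (p : ℕ) [Fact p.Prime] (k : Type) [Field k] [CharP k p] [PerfectRing k p]
    -- B̄, a smooth affine k-algebra
    (Bbar : Type) [CommRing Bbar] [Algebra k Bbar]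
    (hsmooth : Algebra.Smooth k Bbar)
    -- B†, the Monsky–Washnitzer algebra: a p-torsion free W(k)-algebra with B†/pB† = B̄
    (Bdag : Type) [CommRing Bdag] [Algebra (WittVector p k) Bdag]
    (red : Bdag →+* Bbar) (hred : Function.Surjective red)
    (hker : RingHom.ker red = Ideal.span {(p : Bdag)})
    (htf : ∀ x : Bdag, (p : Bdag) * x = 0 → x = 0)
    -- W†(B̄), the ring of overconvergent Witt vectors, a subring of W(B̄)
    (Wdag : Type) [CommRing Wdag] [Algebra (WittVector p k) Wdag]
    (ι : Wdag →+* WittVector p Bbar) (hι : Function.Injective ι)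
    (hιW : ∀ c : WittVector p k,
      ι (algebraMap (WittVector p k) Wdag c) = WittVector.map (algebraMap k Bbar) c)
    -- a Frobenius lift F on B†
    (F : Bdag →+* Bdag) (hF : ∀ b, red (F b) = red b ^ p)
    -- the overconvergent Witt lift t_F : B† → W†(B̄) attached to F, realised as the
    -- structure map of an algebra structure; it lifts `red` in the 0-th Witt coordinate
    -- and intertwines F with the Witt vector Frobenius
    [Algebra Bdag Wdag]
    (htF0 : ∀ b : Bdag, (ι (algebraMap Bdag Wdag b)).coeff 0 = red b)
    (htFF : ∀ b : Bdag, ι (algebraMap Bdag Wdag (F b))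
            = WittVector.frobenius (ι (algebraMap Bdag Wdag b)))
    -- the complex Ω_{B†/W(k)} of continuous differentials (in degrees ≤ 2), with
    -- Ω¹ generated by the image of d
    (DΩ : DGA2 (WittVector p k) Bdag)
    (hgen : Submodule.span Bdag (Set.range DΩ.d0) = ⊤)
    -- the overconvergent de Rham–Witt complex W†Ω_{B̄/k} (in degrees ≤ 2)
    (DW : DGA2 (WittVector p k) Wdag)
    -- the comparison map t_F : Ω_{B†/W(k)} → W†Ω_{B̄/k} on differential forms
    (tF : DGA2Hom DΩ DW (algebraMap Bdag Wdag))
    -- (Ẽ, ∇̃): a free B†-module with integrable connection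
    (E : Type) [AddCommGroup E] [Module Bdag E] (hfree : Module.Free Bdag E)
    (nt : Conn2 DΩ E) (hint : nt.IsIntegrable) :
    -- conclusion: the composite map ∇ on E ⊗_{t_F} W†(B̄) (given on elementary tensors by
    -- the stated formula) satisfies the Leibniz rule, i.e. is a connection
    -- with values in W†Ω¹_{B̄/k}, and is integrable
    ∃ C : Conn2 DW (Wdag ⊗[Bdag] E),
      (∀ (w : Wdag) (e : E),
        C.nabla (w ⊗ₜ[Bdag] e)
          = w • baseChangeForms tF E (nt.nabla e)
            + ((1 : Wdag) ⊗ₜ[Bdag] e) ⊗ₜ[Wdag] DW.d0 w)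
      ∧ C.IsIntegrable :=
  statement1_general p k Bdag Wdag DΩ hgen DW tF E nt hint
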